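/- Let D⊂ℝ^N be bounded and closed, let σ:ℝ→ℝ be continuous with Lip(σ)<∞, and let α,ᾱ,γ,γ̄∈L^∞(0,T;ℝ^N) and β,β̄∈L^∞(0,T;ℝ^{N×N}) be measurable and bounded. Define h(x,t):=α(t)⊙𝛔(β(t)x+γ(t)) and h̄(x,t):=ᾱ(t)⊙𝛔(β̄(t)x+γ̄(t)), and suppose M₁,M₂>0 satisfy |S_h(t)ξ|≤M₁ and |𝛔(β(t)S_h(t)ξ+γ(t))|≤M₂ for all ξ∈D and 0≤t≤T. Set M₃:=M₂+(M₁+1)‖ᾱ‖_{L^∞}Lip(σ) and M₄:=‖ᾱ‖_{L^∞}‖β̄‖_{L^∞}Lip(σ). If ‖α−ᾱ‖_{L¹(0,T)}<ε′, ‖β−β̄‖_{L¹(0,T)}<ε′ and ‖γ−γ̄‖_{L¹(0,T)}<ε′, then sup_{ξ∈D}|S_h(t)ξ − S_{h̄}(t)ξ| ≤ M₃·ε′·e^{M₄T} for all 0≤t≤T. -/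

import Mathlib

open MeasureTheory Set intervalIntegral Bornology Filter
open scoped ENNReal NNReal

noncomputable section

/-- `x` is a solution on `[0,T]` of the ODE `x' = f(x,t)` with initial value `ξ`,
in integral form: `x(t) = ξ + ∫₀ᵗ f(x(s),s) ds`, `x ∈ C⁰([0,T];ℝᴺ)`. -/
def IsSol {N : ℕ} (f : EuclideanSpace ℝ (Fin N) → ℝ → EuclideanSpace ℝ (Fin N)) (T : ℝ)
    (ξ : EuclideanSpace ℝ (Fin N)) (x : ℝ → EuclideanSpace ℝ (Fin N)) : Prop :=
  ContinuousOn x (Set.Icc 0 T) ∧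
    ∀ t ∈ Set.Icc (0 : ℝ) T, x t = ξ + ∫ s in (0 : ℝ)..t, f (x s) s

/-- Hadamard (componentwise) product of two vectors. -/
def had {N : ℕ} (a b : EuclideanSpace ℝ (Fin N)) : EuclideanSpace ℝ (Fin N) :=
  WithLp.toLp 2 (fun i => a i * b i)

/-- Componentwise application of a scalar function `σ : ℝ → ℝ` to a vector. -/
def vecσ {N : ℕ} (σ : ℝ → ℝ) (x : EuclideanSpace ℝ (Fin N)) : EuclideanSpace ℝ (Fin N) :=
  WithLp.toLp 2 (fun i => σ (x i))

/-- Action of an `N × N` matrix on a vector: `(A x)ᵢ = ∑ⱼ Aᵢⱼ xⱼ`. -/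
def mvec {N : ℕ} (A : Matrix (Fin N) (Fin N) ℝ) (x : EuclideanSpace ℝ (Fin N)) :
    EuclideanSpace ℝ (Fin N) :=
  WithLp.toLp 2 (fun i => ∑ j, A i j * x j)

/-- Euclidean operator norm of a matrix. -/
def matNorm {N : ℕ} (A : Matrix (Fin N) (Fin N) ℝ) : ℝ :=
  ‖(Matrix.toEuclideanCLM (𝕜 := ℝ) A :
      EuclideanSpace ℝ (Fin N) →L[ℝ] EuclideanSpace ℝ (Fin N))‖

/-! Subtracting the integral equations of the two flows, the difference of the right-hand sides
splits (by bilinearity of `⊙` and the Lipschitz bound on `𝛔`) into a forcing term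
`M₂|α - ᾱ| + ‖ᾱ‖ Lip(σ) (M₁ ‖β - β̄‖ + |γ - γ̄|)`, whose integral over `(0,T)` is at most `M₃ ε'`,
plus `M₄ |x - x̄|`. Grönwall's inequality in integral form then gives
`|x(t) - x̄(t)| ≤ M₃ ε' e^{M₄ t}`. -/

open Real

theorem EuclideanSpace.norm_le_norm_of_forall_le {ι : Type*} [Fintype ι]
    {x y : EuclideanSpace ℝ ι} (h : ∀ i, ‖x i‖ ≤ ‖y i‖) : ‖x‖ ≤ ‖y‖ := by
  rw [EuclideanSpace.norm_eq, EuclideanSpace.norm_eq]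
  gcongr with i
  exact h i

section Coefficients

variable {N : ℕ}

theorem norm_had_le (a b : EuclideanSpace ℝ (Fin N)) : ‖had a b‖ ≤ ‖a‖ * ‖b‖ := by
  calc ‖had a b‖ ≤ ‖‖b‖ • a‖ :=
        EuclideanSpace.norm_le_norm_of_forall_le fun i => by
          simpa [had, norm_mul, mul_comm] using
            mul_le_mul_of_nonneg_left (PiLp.norm_apply_le b i) (norm_nonneg (a i))
    _ = ‖a‖ * ‖b‖ := by rw [norm_smul, norm_norm, mul_comm]

theorem had_sub_had (a a' b b' : EuclideanSpace ℝ (Fin N)) :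
    had a b - had a' b' = had (a - a') b + had a' (b - b') := by
  ext i
  simp only [had, PiLp.sub_apply, PiLp.add_apply]
  ring

theorem LipschitzWith.vecσ {σ : ℝ → ℝ} {K : ℝ≥0} (hσ : LipschitzWith K σ) :
    LipschitzWith K (vecσ (N := N) σ) :=
  LipschitzWith.of_dist_le_mul fun v w => by
    rw [dist_eq_norm, dist_eq_norm, ← norm_smul_of_nonneg K.coe_nonneg]
    refine EuclideanSpace.norm_le_norm_of_forall_le fun i => ?_
    simpa [_root_.vecσ, norm_smul, ← dist_eq_norm] using hσ.dist_le_mul (v i) (w i)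

theorem mvec_eq_toEuclideanCLM (A : Matrix (Fin N) (Fin N) ℝ) (v : EuclideanSpace ℝ (Fin N)) :
    mvec A v = Matrix.toEuclideanCLM (𝕜 := ℝ) A v :=
  rfl

theorem norm_mvec_le (A : Matrix (Fin N) (Fin N) ℝ) (v : EuclideanSpace ℝ (Fin N)) :
    ‖mvec A v‖ ≤ matNorm A * ‖v‖ :=
  (Matrix.toEuclideanCLM (𝕜 := ℝ) A).le_opNorm v

theorem mvec_add_sub_mvec_add (B B' : Matrix (Fin N) (Fin N) ℝ)
    (z z' g g' : EuclideanSpace ℝ (Fin N)) :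
    mvec B z + g - (mvec B' z' + g') = mvec (B - B') z + (g - g') + mvec B' (z - z') := by
  simp only [mvec_eq_toEuclideanCLM, map_sub, sub_apply]
  abel

theorem matNorm_nonneg (A : Matrix (Fin N) (Fin N) ℝ) : 0 ≤ matNorm A := norm_nonneg _

theorem matNorm_sub_le (A B : Matrix (Fin N) (Fin N) ℝ) :
    matNorm (A - B) ≤ matNorm A + matNorm B := by
  simpa only [matNorm, map_sub] using norm_sub_le _ _

theorem continuous_matNorm : Continuous (matNorm (N := N)) :=
  continuous_norm.comp (LinearMap.continuous_of_finiteDimensional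
    (Matrix.toEuclideanCLM (𝕜 := ℝ) (n := Fin N)).toAlgEquiv.toLinearMap)

theorem Measurable.matNorm {Ω : Type*} [MeasurableSpace Ω] {B : Ω → Matrix (Fin N) (Fin N) ℝ}
    (hB : Measurable fun t => fun i j : Fin N => B t i j) :
    Measurable fun t => _root_.matNorm (B t) :=
  (continuous_matNorm.comp (continuous_id (X := Fin N → Fin N → ℝ))).measurable.comp hB

end Coefficients

/-- The vector field `h(z,t)` of the paper, at `a = α(t)`, `B = β(t)`, `g = γ(t)`. -/
def perceptron {N : ℕ} (σ : ℝ → ℝ) (a : EuclideanSpace ℝ (Fin N))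
    (B : Matrix (Fin N) (Fin N) ℝ) (g z : EuclideanSpace ℝ (Fin N)) : EuclideanSpace ℝ (Fin N) :=
  had a (vecσ σ (mvec B z + g))

section Perceptron

variable {N : ℕ} {σ : ℝ → ℝ}

theorem continuous_perceptron (hσ : Continuous σ) :
    Continuous fun p : EuclideanSpace ℝ (Fin N) × (Fin N → Fin N → ℝ) ×
        EuclideanSpace ℝ (Fin N) × EuclideanSpace ℝ (Fin N) =>
      perceptron σ p.1 (Matrix.of p.2.1) p.2.2.1 p.2.2.2 := by
  unfold perceptron had vecσ mvec
  fun_prop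

theorem AEStronglyMeasurable.perceptron {Ω : Type*} [MeasurableSpace Ω] {μ : Measure Ω}
    (hσ : Continuous σ) {a g z : Ω → EuclideanSpace ℝ (Fin N)}
    {B : Ω → Matrix (Fin N) (Fin N) ℝ} (ha : AEStronglyMeasurable a μ)
    (hB : AEStronglyMeasurable (fun t => fun i j : Fin N => B t i j) μ)
    (hg : AEStronglyMeasurable g μ) (hz : AEStronglyMeasurable z μ) :
    AEStronglyMeasurable (fun t => _root_.perceptron σ (a t) (B t) (g t) (z t)) μ :=
  (continuous_perceptron hσ).comp_aestronglyMeasurable (ha.prodMk (hB.prodMk (hg.prodMk hz)))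

theorem norm_perceptron_sub_perceptron_le {K : ℝ≥0} (hσ : LipschitzWith K σ)
    {a a' g g' z z' : EuclideanSpace ℝ (Fin N)} {B B' : Matrix (Fin N) (Fin N) ℝ}
    {M₁ M₂ A b : ℝ} (hz : ‖z‖ ≤ M₁) (hV : ‖vecσ σ (mvec B z + g)‖ ≤ M₂) (hA : 0 ≤ A)
    (ha' : ‖a'‖ ≤ A) (hB' : matNorm B' ≤ b) :
    ‖perceptron σ a B g z - perceptron σ a' B' g' z'‖ ≤
      M₂ * ‖a - a'‖ + A * K * M₁ * matNorm (B - B') + A * K * ‖g - g'‖ +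
        A * b * K * ‖z - z'‖ := by
  have hin : ‖mvec B z + g - (mvec B' z' + g')‖ ≤
      matNorm (B - B') * M₁ + ‖g - g'‖ + b * ‖z - z'‖ := by
    rw [mvec_add_sub_mvec_add]
    refine (norm_add₃_le ..).trans (add_le_add_three ?_ le_rfl ?_)
    · exact (norm_mvec_le _ _).trans (by gcongr; exact matNorm_nonneg _)
    · exact (norm_mvec_le _ _).trans (by gcongr)
  calc ‖perceptron σ a B g z - perceptron σ a' B' g' z'‖
      ≤ ‖a - a'‖ * ‖vecσ σ (mvec B z + g)‖ +
          ‖a'‖ * ‖vecσ σ (mvec B z + g) - vecσ σ (mvec B' z' + g')‖ := by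
        rw [perceptron, perceptron, had_sub_had]
        exact (norm_add_le _ _).trans (add_le_add (norm_had_le _ _) (norm_had_le _ _))
    _ ≤ ‖a - a'‖ * M₂ + A * (K * (matNorm (B - B') * M₁ + ‖g - g'‖ + b * ‖z - z'‖)) := by
        gcongr
        exact (hσ.vecσ.norm_sub_le _ _).trans (by gcongr)
    _ = _ := by ring

theorem IntegrableOn.perceptron_of_norm_vecσ_le (hσ : Continuous σ) {T M : ℝ}
    {α γ x : ℝ → EuclideanSpace ℝ (Fin N)} {β : ℝ → Matrix (Fin N) (Fin N) ℝ}
    (hmα : Measurable α) (hmβ : Measurable fun t => fun i j : Fin N => β t i j)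
    (hmγ : Measurable γ) (hx : ContinuousOn x (Icc 0 T)) (hα : IntegrableOn α (Ioc 0 T))
    (hM : ∀ t ∈ Icc 0 T, ‖vecσ σ (mvec (β t) (x t) + γ t)‖ ≤ M) :
    IntegrableOn (fun t => perceptron σ (α t) (β t) (γ t) (x t)) (Ioc 0 T) := by
  refine Integrable.mono' (hα.norm.mul_const M) ?_ ?_
  · exact AEStronglyMeasurable.perceptron hσ hmα.aestronglyMeasurable hmβ.aestronglyMeasurable
      hmγ.aestronglyMeasurable ((hx.aestronglyMeasurable measurableSet_Icc).mono_measure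
        (Measure.restrict_mono Ioc_subset_Icc_self le_rfl))
  · filter_upwards [ae_restrict_mem measurableSet_Ioc] with t ht
    exact (norm_had_le _ _).trans (by gcongr; exact hM t (Ioc_subset_Icc_self ht))

end Perceptron

theorem add_mul_gronwallBound_zero (A K t : ℝ) :
    A + K * gronwallBound 0 K A t = A * exp (K * t) := by
  rcases eq_or_ne K 0 with rfl | hK
  · simp
  · rw [gronwallBound_of_K_ne_0 hK]
    field_simp
    ring

theorem le_mul_exp_of_le_add_mul_integral {u : ℝ → ℝ} {T A K : ℝ}
    (hu : ContinuousOn u (Icc 0 T)) (hK : 0 ≤ K)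
    (h : ∀ t ∈ Icc 0 T, u t ≤ A + K * ∫ s in 0..t, u s) :
    ∀ t ∈ Icc 0 T, u t ≤ A * exp (K * t) := by
  intro t ht
  have hT : 0 ≤ T := ht.1.trans ht.2
  -- extend `u` continuously to `ℝ`, so that its primitive is differentiable everywhere
  set v : ℝ → ℝ := fun s => u (projIcc 0 T hT s)
  have hv : Continuous v :=
    hu.comp_continuous (continuous_subtype_val.comp continuous_projIcc) fun s =>
      (projIcc 0 T hT s).2
  have hvu : ∀ s ∈ Icc 0 T, v s = u s := fun s hs => by simp [v, projIcc_of_mem hT hs]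
  have hint : ∀ s ∈ Icc 0 T, ∫ r in 0..s, u r = ∫ r in 0..s, v r := fun s hs =>
    integral_congr fun r hr => (hvu r (uIcc_subset_Icc ⟨le_rfl, hT⟩ hs hr)).symm
  have hw : ∀ s, HasDerivAt (fun s => ∫ r in 0..s, v r) (v s) s := fun s =>
    integral_hasDerivAt_right (hv.intervalIntegrable _ _) (hv.stronglyMeasurableAtFilter _ _)
      hv.continuousAt
  have hgw := le_gronwallBound_of_liminf_deriv_right_le (δ := 0) (K := K) (ε := A)
    (fun s _ => (hw s).continuousAt.continuousWithinAt)
    (fun s _ r hr => (hw s).hasDerivWithinAt.liminf_right_slope_le hr) (by simp)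
    (fun s hs => by
      rw [hvu s (Ico_subset_Icc_self hs), ← hint s (Ico_subset_Icc_self hs)]
      linarith [h s (Ico_subset_Icc_self hs)]) t ht
  rw [sub_zero] at hgw
  calc u t ≤ A + K * ∫ s in 0..t, v s := hint t ht ▸ h t ht
    _ ≤ A + K * gronwallBound 0 K A t := by gcongr
    _ = A * exp (K * t) := add_mul_gronwallBound_zero A K t

theorem norm_le_integral_mul_exp_of_eq_integral {E : Type*} [NormedAddCommGroup E]
    [NormedSpace ℝ E] {e Δ : ℝ → E} {c : ℝ → ℝ} {T K : ℝ}
    (he : ContinuousOn e (Icc 0 T)) (heq : ∀ t ∈ Icc 0 T, e t = ∫ s in 0..t, Δ s)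
    (hc : IntegrableOn c (Ioc 0 T)) (hc0 : ∀ᵐ s ∂volume.restrict (Ioc 0 T), 0 ≤ c s)
    (hK : 0 ≤ K) (hΔ : ∀ᵐ s ∂volume.restrict (Ioc 0 T), ‖Δ s‖ ≤ c s + K * ‖e s‖) :
    ∀ t ∈ Icc 0 T, ‖e t‖ ≤ (∫ s in 0..T, c s) * exp (K * t) := by
  have hne : ContinuousOn (fun s => ‖e s‖) (Icc 0 T) := continuous_norm.comp_continuousOn he
  refine le_mul_exp_of_le_add_mul_integral hne hK fun t ht => ?_
  have hsub : Ioc 0 t ⊆ Ioc 0 T := Ioc_subset_Ioc_right ht.2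
  have hct : IntervalIntegrable c volume 0 t :=
    (intervalIntegrable_iff_integrableOn_Ioc_of_le ht.1).2 (hc.mono_set hsub)
  have het : IntervalIntegrable (fun s => ‖e s‖) volume 0 t :=
    (hne.mono (Icc_subset_Icc_right ht.2)).intervalIntegrable_of_Icc ht.1
  calc ‖e t‖ = ‖∫ s in 0..t, Δ s‖ := by rw [heq t ht]
    _ ≤ ∫ s in 0..t, ‖Δ s‖ := norm_integral_le_integral_norm ht.1
    _ ≤ ∫ s in 0..t, (c s + K * ‖e s‖) := by
      rw [integral_of_le ht.1, integral_of_le ht.1]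
      exact integral_mono_of_nonneg (ae_of_all _ fun _ => norm_nonneg _)
        (hct.add (het.const_mul K)).1 (ae_restrict_of_ae_restrict_of_subset hsub hΔ)
    _ = (∫ s in 0..t, c s) + K * ∫ s in 0..t, ‖e s‖ := by
      rw [integral_add hct (het.const_mul K), intervalIntegral.integral_const_mul]
    _ ≤ (∫ s in 0..T, c s) + K * ∫ s in 0..t, ‖e s‖ := by
      gcongr
      exact integral_mono_interval le_rfl ht.1 ht.2 hc0
        ((intervalIntegrable_iff_integrableOn_Ioc_of_le (ht.1.trans ht.2)).2 hc)

theorem IsSol.sub_eq_integral {N : ℕ}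
    {f g : EuclideanSpace ℝ (Fin N) → ℝ → EuclideanSpace ℝ (Fin N)} {T : ℝ}
    {ξ : EuclideanSpace ℝ (Fin N)} {x y : ℝ → EuclideanSpace ℝ (Fin N)}
    (hx : IsSol f T ξ x) (hy : IsSol g T ξ y) (hf : IntegrableOn (fun s => f (x s) s) (Ioc 0 T))
    (hg : IntegrableOn (fun s => g (y s) s) (Ioc 0 T)) :
    ∀ t ∈ Icc 0 T, x t - y t = ∫ s in 0..t, (f (x s) s - g (y s) s) := by
  intro t ht
  have hsub : Ioc 0 t ⊆ Ioc 0 T := Ioc_subset_Ioc_right ht.2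
  rw [hx.2 t ht, hy.2 t ht, integral_sub
    ((intervalIntegrable_iff_integrableOn_Ioc_of_le ht.1).2 (hf.mono_set hsub))
    ((intervalIntegrable_iff_integrableOn_Ioc_of_le ht.1).2 (hg.mono_set hsub))]
  abel

theorem norm_sub_le_of_isSol_perceptron {N : ℕ} {T : ℝ} {σ : ℝ → ℝ} {Kσ : ℝ≥0}
    (hσ : LipschitzWith Kσ σ) {α αb γ γb : ℝ → EuclideanSpace ℝ (Fin N)}
    {β βb : ℝ → Matrix (Fin N) (Fin N) ℝ} (hmα : Measurable α) (hmαb : Measurable αb)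
    (hmγ : Measurable γ) (hmγb : Measurable γb)
    (hmβ : Measurable fun t => fun i j : Fin N => β t i j)
    (hmβb : Measurable fun t => fun i j : Fin N => βb t i j)
    {ξ : EuclideanSpace ℝ (Fin N)} {x xb : ℝ → EuclideanSpace ℝ (Fin N)}
    (hx : IsSol (fun z t => perceptron σ (α t) (β t) (γ t) z) T ξ x)
    (hxb : IsSol (fun z t => perceptron σ (αb t) (βb t) (γb t) z) T ξ xb)
    (hα : IntervalIntegrable α volume 0 T)
    (hdα : IntervalIntegrable (fun t => ‖α t - αb t‖) volume 0 T)
    (hdβ : IntervalIntegrable (fun t => matNorm (β t - βb t)) volume 0 T)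
    (hdγ : IntervalIntegrable (fun t => ‖γ t - γb t‖) volume 0 T) {M₁ M₂ Aα Bβ : ℝ}
    (hM₁ : ∀ t ∈ Icc 0 T, ‖x t‖ ≤ M₁)
    (hM₂ : ∀ t ∈ Icc 0 T, ‖vecσ σ (mvec (β t) (x t) + γ t)‖ ≤ M₂)
    (hAα0 : 0 ≤ Aα) (hAα : ∀ᵐ t ∂volume.restrict (Ioc 0 T), ‖αb t‖ ≤ Aα)
    (hBβ0 : 0 ≤ Bβ) (hBβ : ∀ᵐ t ∂volume.restrict (Ioc 0 T), matNorm (βb t) ≤ Bβ) :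
    ∀ t ∈ Icc 0 T, ‖x t - xb t‖ ≤
      (M₂ * (∫ s in 0..T, ‖α s - αb s‖) + Aα * Kσ * M₁ * (∫ s in 0..T, matNorm (β s - βb s)) +
        Aα * Kσ * ∫ s in 0..T, ‖γ s - γb s‖) * exp (Aα * Bβ * Kσ * t) := by
  intro t ht
  have h0 : (0 : ℝ) ∈ Icc 0 T := ⟨le_rfl, ht.1.trans ht.2⟩
  have hM₁0 : 0 ≤ M₁ := (norm_nonneg _).trans (hM₁ 0 h0)
  have hM₂0 : 0 ≤ M₂ := (norm_nonneg _).trans (hM₂ 0 h0)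
  set c : ℝ → ℝ := fun s => M₂ * ‖α s - αb s‖ + Aα * Kσ * M₁ * matNorm (β s - βb s) +
    Aα * Kσ * ‖γ s - γb s‖
  set F := fun s => perceptron σ (α s) (β s) (γ s) (x s)
  set Fb := fun s => perceptron σ (αb s) (βb s) (γb s) (xb s)
  have hc : IntervalIntegrable c volume 0 T :=
    ((hdα.const_mul _).add (hdβ.const_mul _)).add (hdγ.const_mul _)
  have hu : IntegrableOn (fun s => ‖x s - xb s‖) (Ioc 0 T) :=
    (((hx.1.sub hxb.1).norm).integrableOn_Icc).mono_set Ioc_subset_Icc_self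
  have hF : IntegrableOn F (Ioc 0 T) :=
    IntegrableOn.perceptron_of_norm_vecσ_le hσ.continuous hmα hmβ hmγ hx.1 hα.1 hM₂
  have hFFb : ∀ᵐ s ∂volume.restrict (Ioc 0 T),
      ‖F s - Fb s‖ ≤ c s + Aα * Bβ * Kσ * ‖x s - xb s‖ := by
    filter_upwards [hAα, hBβ, ae_restrict_mem measurableSet_Ioc] with s hαs hβs hs
    exact norm_perceptron_sub_perceptron_le hσ (hM₁ s (Ioc_subset_Icc_self hs))
      (hM₂ s (Ioc_subset_Icc_self hs)) hAα0 hαs hβs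
  have hFb : IntegrableOn Fb (Ioc 0 T) := by
    refine Integrable.mono' (hF.norm.add (hc.1.add (hu.const_mul (Aα * Bβ * Kσ)))) ?_ ?_
    · exact AEStronglyMeasurable.perceptron hσ.continuous hmαb.aestronglyMeasurable
        hmβb.aestronglyMeasurable hmγb.aestronglyMeasurable
        ((hxb.1.aestronglyMeasurable measurableSet_Icc).mono_measure
          (Measure.restrict_mono Ioc_subset_Icc_self le_rfl))
    · filter_upwards [hFFb] with s hs
      calc ‖Fb s‖ ≤ ‖F s‖ + ‖F s - Fb s‖ := norm_le_insert _ _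
        _ ≤ _ := by simp only [Pi.add_apply]; linarith
  have hc0 : ∀ s, 0 ≤ c s := fun s => by simp only [c, matNorm]; positivity
  calc ‖x t - xb t‖ ≤ (∫ s in 0..T, c s) * exp (Aα * Bβ * Kσ * t) :=
        norm_le_integral_mul_exp_of_eq_integral (hx.1.sub hxb.1)
          (hx.sub_eq_integral hxb hF hFb) hc.1 (ae_of_all _ hc0) (by positivity) hFFb t ht
    _ = _ := by
        rw [integral_add ((hdα.const_mul _).add (hdβ.const_mul _)) (hdγ.const_mul _),
          integral_add (hdα.const_mul _) (hdβ.const_mul _), intervalIntegral.integral_const_mul,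
          intervalIntegral.integral_const_mul, intervalIntegral.integral_const_mul]

theorem intervalIntegrable_coefficients {N : ℕ} {T C Aα Bβ : ℝ} (hT : 0 ≤ T)
    {α αb γ γb : ℝ → EuclideanSpace ℝ (Fin N)} {β βb : ℝ → Matrix (Fin N) (Fin N) ℝ}
    (hmα : Measurable α) (hmαb : Measurable αb) (hmγ : Measurable γ) (hmγb : Measurable γb)
    (hmβ : Measurable fun t => fun i j : Fin N => β t i j)
    (hmβb : Measurable fun t => fun i j : Fin N => βb t i j)
    (hC : ∀ᵐ t ∂volume.restrict (Ioc 0 T),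
      ‖α t‖ ≤ C ∧ ‖γ t‖ ≤ C ∧ ‖γb t‖ ≤ C ∧ matNorm (β t) ≤ C)
    (hAα : ∀ᵐ t ∂volume.restrict (Ioc 0 T), ‖αb t‖ ≤ Aα)
    (hBβ : ∀ᵐ t ∂volume.restrict (Ioc 0 T), matNorm (βb t) ≤ Bβ) :
    IntervalIntegrable α volume 0 T ∧
      IntervalIntegrable (fun t => ‖α t - αb t‖) volume 0 T ∧
      IntervalIntegrable (fun t => matNorm (β t - βb t)) volume 0 T ∧
      IntervalIntegrable (fun t => ‖γ t - γb t‖) volume 0 T := by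
  simp only [intervalIntegrable_iff_integrableOn_Ioc_of_le hT]
  refine ⟨Integrable.of_bound hmα.aestronglyMeasurable C (hC.mono fun _ h => h.1),
    Integrable.of_bound (hmα.sub hmαb).norm.aestronglyMeasurable (C + Aα) ?_,
    Integrable.of_bound
      (Measurable.matNorm (B := fun t => β t - βb t) (hmβ.sub hmβb)).aestronglyMeasurable
      (C + Bβ) ?_,
    Integrable.of_bound (hmγ.sub hmγb).norm.aestronglyMeasurable (C + C) ?_⟩
  · filter_upwards [hC, hAα] with t ht hαt
    exact (norm_norm _).trans_le ((norm_sub_le _ _).trans (add_le_add ht.1 hαt))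
  · filter_upwards [hC, hBβ] with t ht hβt
    exact (Real.norm_of_nonneg (matNorm_nonneg _)).trans_le
      ((matNorm_sub_le _ _).trans (add_le_add ht.2.2.2 hβt))
  · filter_upwards [hC] with t ht
    exact (norm_norm _).trans_le ((norm_sub_le _ _).trans (add_le_add ht.2.1 ht.2.2.1))

theorem coefficient_L1_stability_general {N : ℕ} (T : ℝ) (hT : 0 < T)
    (D : Set (EuclideanSpace ℝ (Fin N)))
    (σ : ℝ → ℝ) (Kσ : ℝ≥0) (hσl : LipschitzWith Kσ σ)
    (α αb γ γb : ℝ → EuclideanSpace ℝ (Fin N)) (β βb : ℝ → Matrix (Fin N) (Fin N) ℝ)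
    (hmα : Measurable α) (hmαb : Measurable αb) (hmγ : Measurable γ)
    (hmγb : Measurable γb) (hmβ : Measurable fun t => fun i j : Fin N => β t i j)
    (hmβb : Measurable fun t => fun i j : Fin N => βb t i j)
    (hbdd : ∃ C : ℝ, ∀ᵐ t ∂(volume.restrict (Set.Ioc (0 : ℝ) T)),
      ‖α t‖ ≤ C ∧ ‖γ t‖ ≤ C ∧ ‖γb t‖ ≤ C ∧ matNorm (β t) ≤ C)
    (Aα : ℝ) (hAα : ∀ᵐ t ∂(volume.restrict (Set.Ioc (0 : ℝ) T)), ‖αb t‖ ≤ Aα)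
    (Bβ : ℝ) (hBβ : ∀ᵐ t ∂(volume.restrict (Set.Ioc (0 : ℝ) T)), matNorm (βb t) ≤ Bβ)
    (x xb : EuclideanSpace ℝ (Fin N) → ℝ → EuclideanSpace ℝ (Fin N))
    (hx : ∀ ξ ∈ D, IsSol (fun z t => had (α t) (vecσ σ (mvec (β t) z + γ t))) T ξ (x ξ))
    (hxb : ∀ ξ ∈ D,
      IsSol (fun z t => had (αb t) (vecσ σ (mvec (βb t) z + γb t))) T ξ (xb ξ))
    (M₁ M₂ : ℝ)
    (hM₁ : ∀ ξ ∈ D, ∀ t ∈ Set.Icc (0 : ℝ) T, ‖x ξ t‖ ≤ M₁)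
    (hM₂ : ∀ ξ ∈ D, ∀ t ∈ Set.Icc (0 : ℝ) T, ‖vecσ σ (mvec (β t) (x ξ t) + γ t)‖ ≤ M₂)
    (ε' : ℝ)
    (hα1 : (∫ t in (0 : ℝ)..T, ‖α t - αb t‖) < ε')
    (hβ1 : (∫ t in (0 : ℝ)..T, matNorm (β t - βb t)) < ε')
    (hγ1 : (∫ t in (0 : ℝ)..T, ‖γ t - γb t‖) < ε') :
    ∀ ξ ∈ D, ∀ t ∈ Set.Icc (0 : ℝ) T,
      ‖x ξ t - xb ξ t‖ ≤
        (M₂ + (M₁ + 1) * Aα * (Kσ : ℝ)) * ε' * Real.exp ((Aα * Bβ * (Kσ : ℝ)) * T) := by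
  intro ξ hξ t ht
  have : NeZero (volume.restrict (Ioc (0 : ℝ) T)) := ⟨by simp [hT]⟩
  have hAα0 : 0 ≤ Aα := let ⟨_, h⟩ := hAα.exists; (norm_nonneg _).trans h
  have hBβ0 : 0 ≤ Bβ := let ⟨_, h⟩ := hBβ.exists; (matNorm_nonneg _).trans h
  have hM₁0 : 0 ≤ M₁ := (norm_nonneg _).trans (hM₁ ξ hξ 0 ⟨le_rfl, hT.le⟩)
  obtain ⟨C, hC⟩ := hbdd
  obtain ⟨hα, hdα, hdβ, hdγ⟩ := intervalIntegrable_coefficients hT.le hmα hmαb hmγ hmγb hmβ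
    hmβb hC hAα hBβ
  calc ‖x ξ t - xb ξ t‖
      ≤ (M₂ * (∫ s in 0..T, ‖α s - αb s‖) +
          Aα * Kσ * M₁ * (∫ s in 0..T, matNorm (β s - βb s)) +
          Aα * Kσ * ∫ s in 0..T, ‖γ s - γb s‖) * exp (Aα * Bβ * Kσ * t) :=
        norm_sub_le_of_isSol_perceptron hσl hmα hmαb hmγ hmγb hmβ hmβb (hx ξ hξ) (hxb ξ hξ)
          hα hdα hdβ hdγ (hM₁ ξ hξ) (hM₂ ξ hξ) hAα0 hAα hBβ0 hBβ t ht
    _ ≤ (M₂ * ε' + Aα * Kσ * M₁ * ε' + Aα * Kσ * ε') * exp (Aα * Bβ * Kσ * T) := by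
        have hM₂0 : 0 ≤ M₂ := (norm_nonneg _).trans (hM₂ ξ hξ 0 ⟨le_rfl, hT.le⟩)
        have hε' : 0 ≤ ε' := (integral_nonneg hT.le fun _ _ => norm_nonneg _).trans hα1.le
        gcongr
        exact ht.2
    _ = _ := by ring

/-- Stability of the flow under `L¹` perturbation of the coefficients.
With `h(x,t) = α(t)⊙𝛔(β(t)x+γ(t))` and `h̄(x,t) = ᾱ(t)⊙𝛔(β̄(t)x+γ̄(t))`, bounded
measurable coefficients, flow bounds `M₁, M₂` for `S_h` on `D`, `‖ᾱ‖_{L^∞} ≤ Aα`,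
`‖β̄‖_{L^∞} ≤ Bβ` (operator norm), `M₃ = M₂ + (M₁+1)·Aα·Lip(σ)`,
`M₄ = Aα·Bβ·Lip(σ)`: if the `L¹(0,T)` distances of the coefficients are `< ε′`, then
`‖S_h(t)ξ − S_{h̄}(t)ξ‖ ≤ M₃·ε′·e^{M₄T}` for all `ξ ∈ D`, `t ∈ [0,T]`. -/
theorem coefficient_L1_stability {N : ℕ} (T : ℝ) (hT : 0 < T)
    (D : Set (EuclideanSpace ℝ (Fin N))) (hDb : IsBounded D) (hDc : IsClosed D)
    (σ : ℝ → ℝ) (hσc : Continuous σ) (Kσ : ℝ≥0) (hσl : LipschitzWith Kσ σ)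
    (α αb γ γb : ℝ → EuclideanSpace ℝ (Fin N)) (β βb : ℝ → Matrix (Fin N) (Fin N) ℝ)
    (hmα : Measurable α) (hmαb : Measurable αb) (hmγ : Measurable γ)
    (hmγb : Measurable γb) (hmβ : Measurable fun t => fun i j : Fin N => β t i j)
    (hmβb : Measurable fun t => fun i j : Fin N => βb t i j)
    (hbdd : ∃ C : ℝ, ∀ᵐ t ∂(volume.restrict (Set.Ioc (0 : ℝ) T)),
      ‖α t‖ ≤ C ∧ ‖γ t‖ ≤ C ∧ ‖γb t‖ ≤ C ∧ matNorm (β t) ≤ C)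
    (Aα : ℝ) (hAα : ∀ᵐ t ∂(volume.restrict (Set.Ioc (0 : ℝ) T)), ‖αb t‖ ≤ Aα)
    (Bβ : ℝ) (hBβ : ∀ᵐ t ∂(volume.restrict (Set.Ioc (0 : ℝ) T)), matNorm (βb t) ≤ Bβ)
    (x xb : EuclideanSpace ℝ (Fin N) → ℝ → EuclideanSpace ℝ (Fin N))
    (hx : ∀ ξ ∈ D, IsSol (fun z t => had (α t) (vecσ σ (mvec (β t) z + γ t))) T ξ (x ξ))
    (hxb : ∀ ξ ∈ D,
      IsSol (fun z t => had (αb t) (vecσ σ (mvec (βb t) z + γb t))) T ξ (xb ξ))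
    (M₁ M₂ : ℝ) (hM₁pos : 0 < M₁) (hM₂pos : 0 < M₂)
    (hM₁ : ∀ ξ ∈ D, ∀ t ∈ Set.Icc (0 : ℝ) T, ‖x ξ t‖ ≤ M₁)
    (hM₂ : ∀ ξ ∈ D, ∀ t ∈ Set.Icc (0 : ℝ) T, ‖vecσ σ (mvec (β t) (x ξ t) + γ t)‖ ≤ M₂)
    (ε' : ℝ)
    (hα1 : (∫ t in (0 : ℝ)..T, ‖α t - αb t‖) < ε')
    (hβ1 : (∫ t in (0 : ℝ)..T, matNorm (β t - βb t)) < ε')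
    (hγ1 : (∫ t in (0 : ℝ)..T, ‖γ t - γb t‖) < ε') :
    ∀ ξ ∈ D, ∀ t ∈ Set.Icc (0 : ℝ) T,
      ‖x ξ t - xb ξ t‖ ≤
        (M₂ + (M₁ + 1) * Aα * (Kσ : ℝ)) * ε' * Real.exp ((Aα * Bβ * (Kσ : ℝ)) * T) :=
  coefficient_L1_stability_general T hT D σ Kσ hσl α αb γ γb β βb hmα hmαb hmγ hmγb hmβ hmβb hbdd Aα
    hAα Bβ hBβ x xb hx hxb M₁ M₂ hM₁ hM₂ ε' hα1 hβ1 hγ1
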